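/- arXiv:1303.7046 — 3 statements merged into one kernel-verified Lean document; each statement's English description precedes it below -/
import Mathlib

section
/- Let P : C̃ → C together with ramification numbers e be a ramified covering of small categories, let x̃ be an object of C̃ and x = P(x̃), and let n ≥ 1. Then under the map induced by P from N_n(C̃)^{x̃} to N_n(C)^{x}: every chain in N_n(C)^{x} other than the constant identity chain 1_x = (x →^{1_x} x →^{1_x} ⋯ →^{1_x} x) has exactly e(x̃) preimages, and the constant identity chain 1_x has exactly one preimage, namely the constant identity chain 1_{x̃}. -/
/-!
Lifting a chain from `x̃` amounts to lifting its first arrow from `x̃` and then its tail from the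
target of that lift. Bijectivity on `T(-)` makes the identity the only lift of an identity. It
also shows that a lift of a composite `f ≫ f₂` determines both of its factors, so the pairs
(lift `a` of `f`, lift of `f₂` from the target of `a`) inject into the lifts of `f ≫ f₂`, and
`∑ₐ e(target a) ≤ e(x̃)`. As there are `e(x̃)` such `a` when `f ≠ 1`, every lift of a
non-identity arrow ends at an object of ramification `1`. Induction on the length then shows
that a chain from `x` has `e(x̃)` lifts from `x̃` unless it is constant, in which case it has one.
-/

open CategoryTheory

universe u

/-- The set of morphisms of `C` with target `x`, encoded as a sigma type. -/
abbrev Tgt (C : Type u) [SmallCategory C] (x : C) : Type u := Σ a : C, a ⟶ x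

/-- The set of morphisms of `C` with source `x`, encoded as a sigma type. -/
abbrev Src (C : Type u) [SmallCategory C] (x : C) : Type u := Σ b : C, x ⟶ b

/-- The map `T(xt) → T(P xt)` induced by a functor `P`. -/
def tgtMap {D C : Type u} [SmallCategory D] [SmallCategory C] (P : D ⥤ C) (x : D) :
    Tgt D x → Tgt C (P.obj x) := fun g => ⟨P.obj g.1, P.map g.2⟩

/-- The map `S(xt) → S(P xt)` induced by a functor `P`. -/
def srcMap {D C : Type u} [SmallCategory D] [SmallCategory C] (P : D ⥤ C) (x : D) :
    Src D x → Src C (P.obj x) := fun g => ⟨P.obj g.1, P.map g.2⟩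

/-- `P : D ⥤ C` together with ramification numbers `e` is a ramified covering:
`C` is connected, `e x ≥ 1` for all `x`, `P : T(xt) → T(P xt)` is bijective,
every morphism of `S̄(P xt)` has exactly `e xt` preimages in `S̄(xt)`, and
`e xt = 1` whenever `S̄(P xt)` is empty. -/
structure IsRamifiedCovering {D C : Type u} [SmallCategory D] [SmallCategory C]
    (P : D ⥤ C) (e : D → ℕ) : Prop where
  nonempty : Nonempty C
  zigzag : ∀ x y : C, Zigzag x y
  one_le : ∀ x : D, 1 ≤ e x
  tgt_bij : ∀ x : D, Function.Bijective (tgtMap P x)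
  src_count : ∀ (x : D) (g : Src C (P.obj x)), g ≠ ⟨P.obj x, 𝟙 (P.obj x)⟩ →
    Nat.card {h : Src D x // h ≠ ⟨x, 𝟙 x⟩ ∧ srcMap P x h = g} = e x
  ram_one : ∀ x : D, (∀ g : Src C (P.obj x), g = ⟨P.obj x, 𝟙 (P.obj x)⟩) → e x = 1

/-- A composable chain of `n` morphisms `x₀ → x₁ → ⋯ → xₙ` in `C`
(an element of `N_n(C)`). -/
structure Chain (C : Type u) [SmallCategory C] (n : ℕ) : Type u where
  obj : Fin (n + 1) → C
  map : ∀ i : Fin n, obj i.castSucc ⟶ obj i.succ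

/-- A chain is non-degenerate if none of its morphisms is an identity
(an element of `N̄_n(C)`). -/
def Chain.NonDeg {C : Type u} [SmallCategory C] {n : ℕ} (c : Chain C n) : Prop :=
  ∀ i : Fin n,
    (⟨c.obj i.succ, c.map i⟩ : Src C (c.obj i.castSucc)) ≠ ⟨c.obj i.castSucc, 𝟙 _⟩

/-- The image of a chain under a functor `P`. -/
def Chain.push {D C : Type u} [SmallCategory D] [SmallCategory C] (P : D ⥤ C) {n : ℕ}
    (c : Chain D n) : Chain C n :=
  ⟨fun i => P.obj (c.obj i), fun i => P.map (c.map i)⟩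

/-- The constant identity chain `1_x` at an object `x`. -/
def Chain.const (C : Type u) [SmallCategory C] (x : C) (n : ℕ) : Chain C n :=
  ⟨fun _ => x, fun _ => 𝟙 x⟩

section Arrows

variable {C : Type u} [SmallCategory C]

theorem Tgt.eq_of_sigma_eq {y y' z : C} {u : y ⟶ z} {u' : y' ⟶ z}
    (h : (⟨y, ⟨z, u⟩⟩ : Σ y, Src C y) = ⟨y', ⟨z, u'⟩⟩) : (⟨y, u⟩ : Tgt C z) = ⟨y', u'⟩ := by
  cases h; rfl

theorem Src.comp_congr {x y y' z z' : C} {u : x ⟶ y} {u' : x ⟶ y'} {v : y ⟶ z} {v' : y' ⟶ z'}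
    (hu : (⟨y, u⟩ : Src C x) = ⟨y', u'⟩) (hv : (⟨y, ⟨z, v⟩⟩ : Σ y, Src C y) = ⟨y', ⟨z', v'⟩⟩) :
    (⟨z, u ≫ v⟩ : Src C x) = ⟨z', u' ≫ v'⟩ := by
  cases hu; cases hv; rfl

end Arrows

namespace Chain

variable {C : Type u} [SmallCategory C] {n : ℕ}

theorem ext_heq {c c' : Chain C n} (hobj : c.obj = c'.obj)
    (hmap : ∀ i, c.map i ≍ c'.map i) : c = c' := by
  obtain ⟨obj, map⟩ := c
  obtain ⟨obj', map'⟩ := c'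
  subst hobj
  congr
  exact funext fun i => eq_of_heq (hmap i)

def tail (c : Chain C (n + 1)) : Chain C n :=
  ⟨fun i => c.obj i.succ, fun i => c.map i.succ⟩

-- `c.map 0` has source `c.obj (Fin.castSucc 0)`, which is only defeq (not reducibly) to
-- `c.obj 0`; `head` fixes the type that `cons` and the rewriting tactics expect.
def head (c : Chain C (n + 1)) : c.obj 0 ⟶ c.tail.obj 0 :=
  c.map 0

theorem ext_head_tail {c c' : Chain C (n + 1)} (h0 : c.obj 0 = c'.obj 0) (hhead : c.head ≍ c'.head)
    (htail : c.tail = c'.tail) : c = c' :=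
  ext_heq (funext fun i => Fin.cases h0 (fun j => congrFun (congrArg obj htail) j) i)
    (fun i => Fin.cases hhead (fun j => congr_arg_heq (fun c => c.map j) htail) i)

def cons (x : C) (t : Chain C n) (f : x ⟶ t.obj 0) : Chain C (n + 1) where
  obj := Fin.cons x t.obj
  map := Fin.cases f t.map

@[simp] theorem head_cons (x : C) (t : Chain C n) (f : x ⟶ t.obj 0) :
    (cons x t f).head = f := rfl

@[simp] theorem tail_cons (x : C) (t : Chain C n) (f : x ⟶ t.obj 0) :
    (cons x t f).tail = t := rfl

theorem cons_head_tail (c : Chain C (n + 1)) : cons (c.obj 0) c.tail c.head = c :=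
  ext_head_tail rfl HEq.rfl rfl

theorem exists_eq_cons (c : Chain C (n + 1)) : ∃ x t f, c = cons x t f :=
  ⟨_, _, _, c.cons_head_tail.symm⟩

theorem cons_inj {x : C} {t t' : Chain C n} {f : x ⟶ t.obj 0} {f' : x ⟶ t'.obj 0} :
    cons x t f = cons x t' f' ↔ t = t' ∧ f ≍ f' := by
  refine ⟨fun h => ⟨by rw [← tail_cons x t f, h, tail_cons], congr_arg_heq head h⟩, ?_⟩
  rintro ⟨rfl, hf⟩
  rw [eq_of_heq hf]

theorem const_succ (x : C) : const C x (n + 1) = cons x (const C x n) (𝟙 x) :=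
  ext_head_tail rfl HEq.rfl rfl

theorem cons_eq_const_iff {x : C} {t : Chain C n} {f : x ⟶ t.obj 0} :
    cons x t f = const C x (n + 1) ↔
      t = const C x n ∧ (⟨t.obj 0, f⟩ : Src C x) = ⟨x, 𝟙 x⟩ := by
  rw [const_succ]
  refine cons_inj.trans (and_congr_right ?_)
  rintro rfl
  exact (Sigma.mk.inj_iff.trans (and_iff_right rfl)).symm

theorem eq_const_of_length_zero (c : Chain C 0) : c = const C (c.obj 0) 0 :=
  ext_heq (funext fun i => by rw [Fin.fin_one_eq_zero i]; rfl) (fun i => i.elim0)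

variable {D : Type u} [SmallCategory D] (P : D ⥤ C)

@[simp] theorem push_cons (x : D) (t : Chain D n) (f : x ⟶ t.obj 0) :
    (cons x t f).push P = cons (P.obj x) (t.push P) (P.map f) :=
  ext_head_tail rfl HEq.rfl rfl

@[simp] theorem push_const (x : D) : (const D x n).push P = const C (P.obj x) n :=
  ext_heq rfl fun _ => heq_of_eq (P.map_id x)

theorem push_eq_cons_iff (c : Chain D (n + 1)) {x : D} (hc : c.obj 0 = x)
    {t : Chain C n} {f : P.obj x ⟶ t.obj 0} :
    c.push P = cons (P.obj x) t f ↔ c.tail.push P = t ∧ P.map c.head ≍ f := by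
  obtain ⟨y, t', g, rfl⟩ := c.exists_eq_cons
  obtain rfl : y = x := hc
  rw [push_cons]
  exact cons_inj

end Chain

section Lifts

variable {C D : Type u} [SmallCategory C] [SmallCategory D] {n : ℕ}

abbrev SrcLifts (P : D ⥤ C) (x : D) (f : Src C (P.obj x)) : Type u :=
  {s : Src D x // srcMap P x s = f}

abbrev ChainLifts (P : D ⥤ C) (x : D) (c : Chain C n) : Type u :=
  {c' : Chain D n // c'.obj 0 = x ∧ c'.push P = c}

def chainLiftsConsEquiv (P : D ⥤ C) (x : D) (t : Chain C n) (f : P.obj x ⟶ t.obj 0) :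
    ChainLifts P x (Chain.cons (P.obj x) t f) ≃
      Σ s : SrcLifts P x ⟨t.obj 0, f⟩, ChainLifts P s.1.1 t where
  toFun c' :=
    have hc' := (c'.1.push_eq_cons_iff P c'.2.1).1 c'.2.2
    ⟨⟨⟨c'.1.tail.obj 0, eqToHom c'.2.1.symm ≫ c'.1.head⟩, Sigma.ext (congrArg (·.obj 0) hc'.1) (by
      simp only [srcMap, Functor.map_comp, eqToHom_map]
      exact (eqToHom_comp_heq _ _).trans hc'.2)⟩, ⟨c'.1.tail, rfl, hc'.1⟩⟩
  invFun p := ⟨Chain.cons x p.2.1 (p.1.1.2 ≫ eqToHom p.2.2.1.symm), rfl, by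
    obtain ⟨⟨⟨b, g⟩, hg⟩, ⟨t', ht0, rfl⟩⟩ := p
    dsimp only at ht0
    subst ht0
    simp only [Chain.push_cons, eqToHom_refl, Category.comp_id]
    exact Chain.cons_inj.2 ⟨rfl, (Sigma.mk.inj hg).2⟩⟩
  left_inv c' := by
    obtain ⟨c', rfl, hc'⟩ := c'
    exact Subtype.ext (by simpa using c'.cons_head_tail)
  right_inv p := by
    obtain ⟨⟨⟨b, g⟩, hg⟩, ⟨t', ht0, ht'⟩⟩ := p
    dsimp only at ht0
    subst ht0
    refine Sigma.subtype_ext (Subtype.ext (Sigma.ext rfl (heq_of_eq ?_))) rfl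
    simp only [Chain.head_cons, eqToHom_refl, Category.comp_id]
    exact Category.id_comp g

namespace IsRamifiedCovering

variable {P : D ⥤ C} {e : D → ℕ}

theorem faithful (h : IsRamifiedCovering P e) : P.Faithful where
  map_injective {a b} m₁ m₂ hm := by
    have := (h.tgt_bij b).1 (show tgtMap P b ⟨a, m₁⟩ = tgtMap P b ⟨a, m₂⟩ by simp [tgtMap, hm])
    exact eq_of_heq (Sigma.mk.inj this).2

theorem eq_id_of_srcMap_eq_id (h : IsRamifiedCovering P e) {x : D} {s : Src D x}
    (hs : srcMap P x s = ⟨P.obj x, 𝟙 (P.obj x)⟩) : s = ⟨x, 𝟙 x⟩ := by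
  obtain ⟨b, g⟩ := s
  obtain ⟨hb, hg⟩ := Sigma.mk.inj hs
  have : (⟨x, g⟩ : Tgt D b) = ⟨b, 𝟙 b⟩ := (h.tgt_bij b).1 <| by
    refine Sigma.ext hb.symm (hg.trans ?_)
    change 𝟙 (P.obj x) ≍ P.map (𝟙 b)
    rw [P.map_id, hb]
  obtain ⟨rfl, hg⟩ := Sigma.mk.inj this
  rw [eq_of_heq hg]

theorem card_srcLifts_id (h : IsRamifiedCovering P e) (x : D) :
    Nat.card (SrcLifts P x ⟨P.obj x, 𝟙 (P.obj x)⟩) = 1 :=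
  Nat.card_eq_one_iff_exists.2 ⟨⟨⟨x, 𝟙 x⟩, by simp [srcMap]⟩,
    fun s => Subtype.ext (h.eq_id_of_srcMap_eq_id s.2)⟩

theorem card_srcLifts_of_ne_id (h : IsRamifiedCovering P e) (x : D) {f : Src C (P.obj x)}
    (hf : f ≠ ⟨P.obj x, 𝟙 (P.obj x)⟩) : Nat.card (SrcLifts P x f) = e x := by
  rw [← h.src_count x f hf]
  refine Nat.card_congr (Equiv.subtypeEquivRight fun s => ⟨fun hs => ⟨?_, hs⟩, And.right⟩)
  rintro rfl
  exact hf (by simp [← hs, srcMap])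

theorem finite_srcLifts (h : IsRamifiedCovering P e) (x : D) (f : Src C (P.obj x)) :
    Finite (SrcLifts P x f) := by
  refine Nat.finite_of_card_ne_zero ?_
  by_cases hf : f = ⟨P.obj x, 𝟙 (P.obj x)⟩
  · exact hf ▸ (h.card_srcLifts_id x).trans_ne one_ne_zero
  · exact (h.card_srcLifts_of_ne_id x hf).trans_ne (Nat.one_le_iff_ne_zero.1 (h.one_le x))

theorem card_srcLifts_le (h : IsRamifiedCovering P e) (x : D) (f : Src C (P.obj x)) :
    Nat.card (SrcLifts P x f) ≤ e x := by
  by_cases hf : f = ⟨P.obj x, 𝟙 (P.obj x)⟩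
  · exact hf ▸ (h.card_srcLifts_id x).symm ▸ h.one_le x
  · exact (h.card_srcLifts_of_ne_id x hf).le

-- Phrased in `Σ y, Src C y` so that `P.obj z = y` need only hold propositionally.
theorem card_srcLifts_of_obj_eq (h : IsRamifiedCovering P e) {z : D} {y : C}
    (hz : P.obj z = y) (f : Src C y) (hf : f ≠ ⟨y, 𝟙 y⟩) :
    Nat.card {k : Src D z // (⟨P.obj z, srcMap P z k⟩ : Σ y, Src C y) = ⟨y, f⟩} = e z := by
  subst hz
  rw [← h.card_srcLifts_of_ne_id z hf]
  exact Nat.card_congr (Equiv.subtypeEquivRight fun k => Sigma.mk.inj_iff.trans (by simp))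

theorem sum_ramification_srcLifts_le (h : IsRamifiedCovering P e) {x : D} (f : Src C (P.obj x))
    [Fintype (SrcLifts P x f)] (f₂ : Src C f.1) (hf₂ : f₂ ≠ ⟨f.1, 𝟙 f.1⟩) :
    ∑ a : SrcLifts P x f, e a.1.1 ≤ e x := by
  have := h.faithful
  let B (a : SrcLifts P x f) :=
    {k : Src D a.1.1 // (⟨P.obj a.1.1, srcMap P a.1.1 k⟩ : Σ y, Src C y) = ⟨f.1, f₂⟩}
  have hB (a : SrcLifts P x f) : Nat.card (B a) = e a.1.1 :=
    h.card_srcLifts_of_obj_eq (congrArg Sigma.fst a.2) f₂ hf₂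
  have (a : SrcLifts P x f) : Finite (B a) :=
    Nat.finite_of_card_ne_zero ((hB a).trans_ne (Nat.one_le_iff_ne_zero.1 (h.one_le _)))
  let f₂' : Src C (P.obj x) := ⟨f₂.1, f.2 ≫ f₂.2⟩
  have := h.finite_srcLifts x f₂'
  let compose (p : Σ a, B a) : SrcLifts P x f₂' := ⟨⟨p.2.1.1, p.1.1.2 ≫ p.2.1.2⟩, by
    obtain ⟨⟨⟨b, m⟩, ha⟩, ⟨⟨c, n⟩, hk⟩⟩ := p
    simp only [srcMap, P.map_comp]
    exact Src.comp_congr ha hk⟩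
  -- Bijectivity on `T(c₁)` identifies the second factors, and faithfulness then the first ones.
  have hinj : Function.Injective compose := by
    rintro ⟨⟨⟨b₁, m₁⟩, ha₁⟩, ⟨⟨c₁, n₁⟩, hk₁⟩⟩ ⟨⟨⟨b₂, m₂⟩, ha₂⟩, ⟨⟨c₂, n₂⟩, hk₂⟩⟩ hp
    obtain ⟨rfl, -⟩ := Sigma.mk.inj (congrArg Subtype.val hp)
    obtain ⟨rfl, hn⟩ := Sigma.mk.inj ((h.tgt_bij c₁).1 (Tgt.eq_of_sigma_eq (hk₁.trans hk₂.symm)))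
    obtain rfl := eq_of_heq hn
    obtain rfl : m₁ = m₂ := P.map_injective (eq_of_heq (Sigma.mk.inj (ha₁.trans ha₂.symm)).2)
    rfl
  calc ∑ a : SrcLifts P x f, e a.1.1 = Nat.card (Σ a, B a) := by simp only [Nat.card_sigma, hB]
    _ ≤ Nat.card (SrcLifts P x f₂') := Nat.card_le_card_of_injective compose hinj
    _ ≤ e x := h.card_srcLifts_le x f₂'

theorem ramification_eq_one_of_srcMap_ne_id (h : IsRamifiedCovering P e) {x : D} {g : Src D x}
    (hg : srcMap P x g ≠ ⟨P.obj x, 𝟙 (P.obj x)⟩) : e g.1 = 1 := by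
  by_cases hS : ∀ f₂ : Src C (P.obj g.1), f₂ = ⟨P.obj g.1, 𝟙 (P.obj g.1)⟩
  · exact h.ram_one g.1 hS
  obtain ⟨f₂, hf₂⟩ := not_forall.1 hS
  have := h.finite_srcLifts x (srcMap P x g)
  have := Fintype.ofFinite (SrcLifts P x (srcMap P x g))
  have hcard : ∑ _a : SrcLifts P x (srcMap P x g), 1 = e x := by
    simp [← Nat.card_eq_fintype_card, h.card_srcLifts_of_ne_id x hg]
  have hsum :
      ∑ _a : SrcLifts P x (srcMap P x g), 1 = ∑ a : SrcLifts P x (srcMap P x g), e a.1.1 :=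
    le_antisymm (Finset.sum_le_sum fun a _ => h.one_le a.1.1)
      (hcard ▸ h.sum_ramification_srcLifts_le _ f₂ hf₂)
  exact ((Finset.sum_eq_sum_iff_of_le fun a _ => h.one_le a.1.1).1 hsum ⟨g, rfl⟩
    (Finset.mem_univ _)).symm

open Classical in
theorem card_chainLifts (h : IsRamifiedCovering P e) :
    ∀ {n : ℕ} (x : D) (c : Chain C n), c.obj 0 = P.obj x →
      Nat.card (ChainLifts P x c) = if c = Chain.const C (P.obj x) n then 1 else e x
  | 0, x, c, hc => by
    obtain rfl : c = Chain.const C (P.obj x) 0 := by rw [← hc]; exact c.eq_const_of_length_zero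
    rw [if_pos rfl]
    exact Nat.card_eq_one_iff_exists.2 ⟨⟨Chain.const D x 0, rfl, Chain.push_const P x⟩,
      fun c' => Subtype.ext (by rw [c'.1.eq_const_of_length_zero, c'.2.1])⟩
  | n + 1, x, c, hc => by
    obtain ⟨y, t, f, rfl⟩ := c.exists_eq_cons
    obtain rfl : y = P.obj x := hc
    have := h.finite_srcLifts x ⟨t.obj 0, f⟩
    have := Fintype.ofFinite (SrcLifts P x ⟨t.obj 0, f⟩)
    have IH (s : SrcLifts P x ⟨t.obj 0, f⟩) :=
      h.card_chainLifts s.1.1 t (congrArg Sigma.fst s.2).symm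
    have (s : SrcLifts P x ⟨t.obj 0, f⟩) : Finite (ChainLifts P s.1.1 t) := by
      refine Nat.finite_of_card_ne_zero ((IH s).trans_ne ?_)
      split_ifs
      exacts [one_ne_zero, Nat.one_le_iff_ne_zero.1 (h.one_le _)]
    rw [Nat.card_congr (chainLiftsConsEquiv P x t f), Nat.card_sigma, Chain.cons_eq_const_iff]
    by_cases hf : (⟨t.obj 0, f⟩ : Src C (P.obj x)) = ⟨P.obj x, 𝟙 (P.obj x)⟩
    · have := (Nat.card_eq_one_iff_unique.1 (hf ▸ h.card_srcLifts_id x)).1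
      rw [Fintype.sum_subsingleton _ ⟨⟨x, 𝟙 x⟩, by simp [srcMap, hf]⟩, IH]
      simp [hf]
    · have hone (s : SrcLifts P x ⟨t.obj 0, f⟩) : Nat.card (ChainLifts P s.1.1 t) = 1 := by
        rw [IH, h.ramification_eq_one_of_srcMap_ne_id (s.2.symm ▸ hf), ite_self]
      simp [hone, hf, ← Nat.card_eq_fintype_card, h.card_srcLifts_of_ne_id x hf]

end IsRamifiedCovering

end Lifts

theorem ramifiedCovering_chain_count_general {D C : Type u} [SmallCategory D] [SmallCategory C]
    (P : D ⥤ C) (e : D → ℕ) (h : IsRamifiedCovering P e) (xt : D) (n : ℕ) :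
    (∀ c : Chain C n, c.obj 0 = P.obj xt → c ≠ Chain.const C (P.obj xt) n →
      Nat.card {c' : Chain D n // c'.obj 0 = xt ∧ c'.push P = c} = e xt) ∧
    ((Chain.const D xt n).push P = Chain.const C (P.obj xt) n) ∧
    (∀ c' : Chain D n, c'.obj 0 = xt → c'.push P = Chain.const C (P.obj xt) n →
      c' = Chain.const D xt n) := by
  refine ⟨fun c hc hne => by rw [h.card_chainLifts xt c hc, if_neg hne], Chain.push_const P xt,
    fun c' h0 hc' => ?_⟩
  have hone := h.card_chainLifts xt (Chain.const C (P.obj xt) n) rfl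
  rw [if_pos rfl] at hone
  exact congrArg Subtype.val
    ((Nat.card_eq_one_iff_unique.1 hone).1.allEq ⟨c', h0, hc'⟩ ⟨_, rfl, Chain.push_const P xt⟩)

/-- For a ramified covering `P`, an object `xt` over `x` and `n ≥ 1`,
under the induced map `N_n(C̃)^{xt} → N_n(C)^{x}` every chain starting at `x` other than
the constant identity chain `1_x` has exactly `e(xt)` lifts starting at `xt`, while `1_x`
has exactly one such lift, namely the constant identity chain `1_{xt}`. -/
theorem ramifiedCovering_chain_count {D C : Type u} [SmallCategory D] [SmallCategory C]
    (P : D ⥤ C) (e : D → ℕ) (h : IsRamifiedCovering P e) (xt : D) (n : ℕ) (hn : 1 ≤ n) :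
    (∀ c : Chain C n, c.obj 0 = P.obj xt → c ≠ Chain.const C (P.obj xt) n →
      Nat.card {c' : Chain D n // c'.obj 0 = xt ∧ c'.push P = c} = e xt) ∧
    ((Chain.const D xt n).push P = Chain.const C (P.obj xt) n) ∧
    (∀ c' : Chain D n, c'.obj 0 = xt → c'.push P = Chain.const C (P.obj xt) n →
      c' = Chain.const D xt n) :=
  ramifiedCovering_chain_count_general P e h xt n
end

section
/- Let P : C̃ → C together with ramification numbers e be a ramified covering of small categories. If f : x → y is a morphism in C, then the sum of e(x̃) over all objects x̃ of C̃ with P(x̃) = x equals the sum of e(ỹ) over all objects ỹ of C̃ with P(ỹ) = y (as cardinalities, i.e., there is a bijection between the corresponding multisets). -/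
/-!
Count the lifts of a nonidentity morphism `f : x ⟶ y` in two ways: grouped by source, every
`ã` over `x` contributes `e ã` of them; grouped by target, every `b̃` over `y` receives exactly
one, since `T(b̃) → T(y)` is bijective. Hence the weighted fibre over `x` is in bijection with the
plain fibre over `y`. If `y` has no nonidentity outgoing morphism, all ramification numbers over
`y` are `1` and we are done. Otherwise pick one, `g : y ⟶ z`: the weighted fibres over `x` and `y`
are both in bijection with the plain fibre over `z` (via `f ≫ g` and `g`), unless `f ≫ g = 𝟙 x`,
in which case the weighted fibre over each of `x`, `y` embeds into that over the other, and
Schröder–Bernstein applies.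
-/

open CategoryTheory

universe u

section Lifts

variable {D C : Type u} [SmallCategory D] [SmallCategory C] (P : D ⥤ C)

abbrev ObjFiber (x : C) : Type u := {a : D // P.obj a = x}

abbrev WeightedFiber (e : D → ℕ) (x : C) : Type u := Σ a : ObjFiber P x, Fin (e a.1)

def Lifts {x y : C} (f : x ⟶ y) : Type u :=
  {k : Σ a b : D, a ⟶ b //
    (⟨P.obj k.1, P.obj k.2.1, P.map k.2.2⟩ : Σ a b : C, a ⟶ b) = ⟨x, y, f⟩}

variable {P}

lemma srcMap_eq_iff {x y : C} (f : x ⟶ y) {a : D} (ha : P.obj a = x) (k : Src D a) :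
    srcMap P a k = ⟨y, eqToHom ha ≫ f⟩ ↔
      (⟨P.obj a, P.obj k.1, P.map k.2⟩ : Σ a b : C, a ⟶ b) = ⟨x, y, f⟩ := by
  subst ha
  simp [srcMap]

lemma tgtMap_eq_iff {x y : C} (f : x ⟶ y) {b : D} (hb : P.obj b = y) (k : Tgt D b) :
    tgtMap P b k = ⟨x, f ≫ eqToHom hb.symm⟩ ↔
      (⟨P.obj k.1, P.obj b, P.map k.2⟩ : Σ a b : C, a ⟶ b) = ⟨x, y, f⟩ := by
  subst hb
  simp only [tgtMap, eqToHom_refl, Category.comp_id, Sigma.mk.injEq]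
  constructor <;> rintro ⟨rfl, h⟩ <;> simp_all

def liftsEquivSigmaSrc {x y : C} (f : x ⟶ y) :
    Lifts P f ≃
      Σ a : ObjFiber P x, {k : Src D a.1 // srcMap P a.1 k = ⟨y, eqToHom a.2 ≫ f⟩} where
  toFun l := ⟨⟨l.1.1, congrArg Sigma.fst l.2⟩, ⟨l.1.2, (srcMap_eq_iff f _ _).2 l.2⟩⟩
  invFun q := ⟨⟨q.1.1, q.2.1⟩, (srcMap_eq_iff f q.1.2 q.2.1).1 q.2.2⟩
  left_inv _ := rfl
  right_inv _ := rfl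

def liftsEquivSigmaTgt {x y : C} (f : x ⟶ y) :
    Lifts P f ≃
      Σ b : ObjFiber P y, {k : Tgt D b.1 // tgtMap P b.1 k = ⟨x, f ≫ eqToHom b.2.symm⟩} where
  toFun l :=
    have hb : P.obj l.1.2.1 = y := congrArg (fun s => s.2.1) l.2
    ⟨⟨l.1.2.1, hb⟩, ⟨⟨l.1.1, l.1.2.2⟩, (tgtMap_eq_iff f hb _).2 l.2⟩⟩
  invFun q := ⟨⟨q.2.1.1, q.1.1, q.2.1.2⟩, (tgtMap_eq_iff f q.1.2 q.2.1).1 q.2.2⟩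
  left_inv _ := rfl
  right_inv _ := rfl

end Lifts

namespace IsRamifiedCovering

variable {D C : Type u} [SmallCategory D] [SmallCategory C] {P : D ⥤ C} {e : D → ℕ}
  (h : IsRamifiedCovering P e)
include h

lemma nonempty_fin_equiv_liftsFrom {x y : C} (f : x ⟶ y) (hf : (⟨y, f⟩ : Src C x) ≠ ⟨x, 𝟙 x⟩)
    (a : ObjFiber P x) :
    Nonempty (Fin (e a.1) ≃ {k : Src D a.1 // srcMap P a.1 k = ⟨y, eqToHom a.2 ≫ f⟩}) := by
  obtain ⟨a, rfl⟩ := a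
  have hne : (⟨y, eqToHom rfl ≫ f⟩ : Src C (P.obj a)) ≠ ⟨P.obj a, 𝟙 (P.obj a)⟩ := by
    simpa using hf
  have hcard : Nat.card {k : Src D a // srcMap P a k = ⟨y, eqToHom rfl ≫ f⟩} = e a := by
    rw [← h.src_count a _ hne]
    refine Nat.card_congr (Equiv.subtypeEquivRight fun k => ⟨fun hk => ⟨?_, hk⟩, And.right⟩)
    rintro rfl
    exact hne (hk.symm.trans (by simp [srcMap]))
  have hpos : Nat.card {k : Src D a // srcMap P a k = ⟨y, eqToHom rfl ≫ f⟩} ≠ 0 := by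
    rw [hcard]
    exact Nat.one_le_iff_ne_zero.mp (h.one_le a)
  exact ⟨(finCongr hcard.symm).trans (Nat.equivFinOfCardPos hpos).symm⟩

lemma nonempty_weightedFiber_equiv_objFiber {x y : C} (f : x ⟶ y)
    (hf : (⟨y, f⟩ : Src C x) ≠ ⟨x, 𝟙 x⟩) :
    Nonempty (WeightedFiber P e x ≃ ObjFiber P y) := by
  have liftsFrom a := (h.nonempty_fin_equiv_liftsFrom f hf a).some
  have (b : ObjFiber P y) :
      Unique {k : Tgt D b.1 // tgtMap P b.1 k = ⟨x, f ≫ eqToHom b.2.symm⟩} :=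
    ((unique_subtype_iff_existsUnique _).2 ((h.tgt_bij b.1).existsUnique _)).some
  exact ⟨(Equiv.sigmaCongrRight liftsFrom).trans <| (liftsEquivSigmaSrc f).symm.trans <|
    (liftsEquivSigmaTgt f).trans (Equiv.sigmaUnique _ _)⟩

lemma nonempty_weightedFiber_equiv_objFiber_of_forall_eq_id {y : C}
    (hy : ∀ g : Src C y, g = ⟨y, 𝟙 y⟩) :
    Nonempty (WeightedFiber P e y ≃ ObjFiber P y) := by
  have (b : ObjFiber P y) : Unique (Fin (e b.1)) := by
    obtain ⟨b, rfl⟩ := b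
    rw [h.ram_one b hy]
    infer_instance
  exact ⟨Equiv.sigmaUnique _ _⟩

def objFiberEmbedding (x : C) : ObjFiber P x ↪ WeightedFiber P e x :=
  ⟨fun a => ⟨a, ⟨0, h.one_le a.1⟩⟩, fun _ _ hab => congrArg Sigma.fst hab⟩

end IsRamifiedCovering

/-- For a ramified covering `P` and a morphism `f : x ⟶ y` in `C`,
the multiset of objects over `x` (each `xt` counted `e xt` times) is in bijection with
the multiset of objects over `y`; in particular `Σ_{P xt = x} e(xt) = Σ_{P yt = y} e(yt)`. -/
theorem ramifiedCovering_fiber_multiset_equiv_of_hom {D C : Type u}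
    [SmallCategory D] [SmallCategory C]
    (P : D ⥤ C) (e : D → ℕ) (h : IsRamifiedCovering P e) {x y : C} (f : x ⟶ y) :
    Nonempty ((Σ a : {a : D // P.obj a = x}, Fin (e a.1)) ≃
      (Σ b : {b : D // P.obj b = y}, Fin (e b.1))) := by
  by_cases hf : (⟨y, f⟩ : Src C x) = ⟨x, 𝟙 x⟩
  · obtain rfl : y = x := congrArg Sigma.fst hf
    exact ⟨Equiv.refl _⟩
  obtain ⟨eX⟩ := h.nonempty_weightedFiber_equiv_objFiber f hf
  by_cases hy : ∀ g : Src C y, g = ⟨y, 𝟙 y⟩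
  · obtain ⟨eY⟩ := h.nonempty_weightedFiber_equiv_objFiber_of_forall_eq_id hy
    exact ⟨eX.trans eY.symm⟩
  obtain ⟨⟨z, g⟩, hg⟩ := not_forall.1 hy
  obtain ⟨eY⟩ := h.nonempty_weightedFiber_equiv_objFiber g hg
  by_cases hfg : (⟨z, f ≫ g⟩ : Src C x) = ⟨x, 𝟙 x⟩
  · obtain rfl : z = x := congrArg Sigma.fst hfg
    exact Function.Embedding.antisymm (eX.toEmbedding.trans (h.objFiberEmbedding y))
      (eY.toEmbedding.trans (h.objFiberEmbedding _))
  obtain ⟨eXZ⟩ := h.nonempty_weightedFiber_equiv_objFiber (f ≫ g) hfg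
  exact ⟨eXZ.trans eY.symm⟩
end

section
/- Let P : C̃ → C together with ramification numbers e be a d-fold ramified covering of finite categories. Then the zeta function of C divides that of C̃; precisely, as formal power series over ℚ, ζ_{C̃}(z) = ζ_C(z)^d · (1 − z)^V, where V = Σ_{x̃ ∈ Ob(C̃)} (e(x̃) − 1) (a nonnegative integer). -/
open CategoryTheory

universe u

/-- `P` is a `d`-fold ramified covering: for every object `x` of `C`, the multiset
`R(x)` of objects over `x`, each counted with multiplicity its ramification number,
has cardinality `d`, i.e. `Σ_{P xt = x} e(xt) = d`. -/
def IsDFold {D C : Type u} [SmallCategory D] [SmallCategory C]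
    (P : D ⥤ C) (e : D → ℕ) (d : ℕ) : Prop :=
  ∀ x : C, Nat.card (Σ a : {a : D // P.obj a = x}, Fin (e a.1)) = d

/-- The formal exponential `exp(f) = Σ_k f^k / k!` of a power series `f` over `ℚ`
(defined coefficientwise; it agrees with the usual exponential when the constant
term of `f` vanishes, since then `f^k` contributes nothing in degrees `< k`). -/
noncomputable def formalExp (f : PowerSeries ℚ) : PowerSeries ℚ :=
  PowerSeries.mk fun n =>
    ∑ k ∈ Finset.range (n + 1), PowerSeries.coeff n (f ^ k) / (Nat.factorial k)

/-- The zeta function of a finite category `C`: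
`ζ_C(z) = exp (Σ_{m ≥ 1} (#N_m(C) / m) z^m) ∈ ℚ⟦z⟧`. -/
noncomputable def catZeta (C : Type u) [SmallCategory C] : PowerSeries ℚ :=
  formalExp (PowerSeries.mk fun m => if m = 0 then 0 else (Nat.card (Chain C m) : ℚ) / m)


/-!
Taking logarithms, the identity amounts to `d · #N_m(C) = #N_m(C̃) + V` for every `m ≥ 1`, since
`log (1 - z) = -Σ_{m ≥ 1} z^m / m`.

Condition (i) says that `P` is a discrete fibration, so a chain of `C` lifts uniquely once a lift
of its last object is chosen: `#N_m(C̃) = Σ_c #P⁻¹(last c)`. Counting the lifts of the last object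
with multiplicity `e` instead gives `d · #N_m(C)`, and the difference is
`Σ_c Σ_{x̃ over last c} (e(x̃) - 1)`. A ramified object `x̃` (`e(x̃) ≥ 2`) receives no
non-identity morphism: the lifts of a non-identity `g : z → P x̃` counted by their targets number
`#P⁻¹(P x̃)`, counted by their sources `Σ_{P ỹ = z} e(ỹ) = d`, and `#P⁻¹(P x̃) = d` forces
`e = 1` on the fibre. So the only chain ending at `P x̃` is the constant one, and the difference
is exactly `V`.
-/

open CategoryTheory PowerSeries

theorem PowerSeries.eq_of_derivative_eq_mul {R : Type*} [CommRing R] [IsAddTorsionFree R]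
    {p u v : R⟦X⟧} (hu : d⁄dX R u = p * u) (hv : d⁄dX R v = p * v)
    (h0 : constantCoeff u = constantCoeff v) : u = v := by
  ext n
  induction n using Nat.strong_induction_on with
  | _ n ih =>
    rcases n with _ | n
    · simpa using h0
    · have hpu : coeff n (p * u) = coeff n (p * v) := by
        rw [coeff_mul, coeff_mul]
        refine Finset.sum_congr rfl fun ij hij => ?_
        rw [ih ij.2 (Nat.lt_succ_of_le (Finset.HasAntidiagonal.antidiagonal.snd_le hij))]
      have h := congrArg (coeff n) hu
      rw [hpu, ← hv, coeff_derivative, coeff_derivative, ← Nat.cast_succ, mul_comm,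
        ← nsmul_eq_mul, mul_comm, ← nsmul_eq_mul] at h
      exact (smul_right_inj n.succ_ne_zero).1 h

theorem formalExp_eq_subst {f : ℚ⟦X⟧} (hf : constantCoeff f = 0) :
    formalExp f = (exp ℚ).subst f := by
  ext n
  have hsupp : (Function.support fun k => coeff k (exp ℚ) • coeff n (f ^ k)) ⊆
      Finset.range (n + 1) := by
    intro k hk
    by_contra hkn
    have hdvd : X ^ k ∣ f ^ k := pow_dvd_pow_of_dvd (X_dvd_iff.2 hf) k
    apply hk
    dsimp only
    rw [X_pow_dvd_iff.1 hdvd n (by simpa using hkn), smul_zero]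
  rw [coeff_subst' (HasSubst.of_constantCoeff_zero' hf), finsum_eq_sum_of_support_subset _ hsupp,
    formalExp, coeff_mk]
  simp [coeff_exp, div_eq_inv_mul]

theorem constantCoeff_formalExp (f : ℚ⟦X⟧) : constantCoeff (formalExp f) = 1 := by
  rw [← coeff_zero_eq_constantCoeff_apply, formalExp, coeff_mk]
  simp

theorem derivative_formalExp {f : ℚ⟦X⟧} (hf : constantCoeff f = 0) :
    d⁄dX ℚ (formalExp f) = d⁄dX ℚ f * formalExp f := by
  rw [formalExp_eq_subst hf, derivative_subst (HasSubst.of_constantCoeff_zero' hf),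
    derivative_exp, mul_comm]

theorem formalExp_add {f g : ℚ⟦X⟧} (hf : constantCoeff f = 0) (hg : constantCoeff g = 0) :
    formalExp (f + g) = formalExp f * formalExp g := by
  refine eq_of_derivative_eq_mul (derivative_formalExp (by simp [hf, hg])) ?_ ?_
  · rw [Derivation.leibniz, smul_eq_mul, smul_eq_mul, derivative_formalExp hf,
      derivative_formalExp hg, map_add]
    ring
  · simp [constantCoeff_formalExp]

theorem formalExp_zero : formalExp 0 = 1 := by
  ext n
  rcases n with _ | n <;> simp [formalExp, coeff_one, Finset.sum_range_succ']

theorem formalExp_nsmul {f : ℚ⟦X⟧} (hf : constantCoeff f = 0) (k : ℕ) :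
    formalExp (k • f) = formalExp f ^ k := by
  induction k with
  | zero => rw [zero_smul, formalExp_zero, pow_zero]
  | succ k ih => rw [succ_nsmul, formalExp_add (by simp [hf]) hf, ih, pow_succ]

theorem formalExp_rescale (a : ℚ) (f : ℚ⟦X⟧) :
    formalExp (rescale a f) = rescale a (formalExp f) := by
  ext n
  simp [formalExp, coeff_rescale, ← map_pow, Finset.mul_sum, mul_div_assoc]

theorem formalExp_log : formalExp (log ℚ) = 1 + X := by
  refine eq_of_derivative_eq_mul (derivative_formalExp constantCoeff_log) ?_
    (by simp [constantCoeff_formalExp])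
  rw [deriv_log, Derivation.map_add, derivative_X, Derivation.map_one_eq_zero, zero_add]
  ext n
  rcases n with _ | n <;> simp [mul_add, coeff_succ_mul_X, coeff_one, pow_succ]

theorem coeff_rescale_neg_one_log {n : ℕ} (hn : n ≠ 0) :
    coeff n (rescale (-1 : ℚ) (log ℚ)) = -1 / n := by
  simp [coeff_rescale, hn, pow_succ, mul_div_assoc', ← mul_pow]

theorem constantCoeff_rescale_neg_one_log : constantCoeff (rescale (-1 : ℚ) (log ℚ)) = 0 := by
  rw [← coeff_zero_eq_constantCoeff_apply, coeff_rescale]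
  simp

theorem formalExp_rescale_neg_one_log : formalExp (rescale (-1 : ℚ) (log ℚ)) = 1 - X := by
  rw [formalExp_rescale, formalExp_log, map_add, map_one, rescale_neg_one_X, sub_eq_add_neg]

noncomputable def catLogZeta (C : Type u) [SmallCategory C] : ℚ⟦X⟧ :=
  mk fun m => if m = 0 then 0 else (Nat.card (Chain C m) : ℚ) / m

theorem catZeta_eq_formalExp (C : Type u) [SmallCategory C] :
    catZeta C = formalExp (catLogZeta C) :=
  rfl

theorem constantCoeff_catLogZeta (C : Type u) [SmallCategory C] :
    constantCoeff (catLogZeta C) = 0 := by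
  simp [← coeff_zero_eq_constantCoeff_apply, catLogZeta]

section Covering

variable {D C : Type u} [SmallCategory D] [SmallCategory C]

abbrev Mor (C : Type u) [SmallCategory C] : Type u := Σ a : C, Src C a

namespace Mor

theorem mk_eqToHom_comp {a a' b : C} (h : a = a') (f : a' ⟶ b) :
    (⟨a, b, eqToHom h ≫ f⟩ : Mor C) = ⟨a', b, f⟩ := by
  subst h; simp

theorem mk_comp_eqToHom {a b b' : C} (f : a ⟶ b) (h : b = b') :
    (⟨a, b', f ≫ eqToHom h⟩ : Mor C) = ⟨a, b, f⟩ := by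
  subst h; simp

theorem mk_eq_mk_iff_tgt {a a' b : C} (f : a ⟶ b) (f' : a' ⟶ b) :
    (⟨a, b, f⟩ : Mor C) = ⟨a', b, f'⟩ ↔ (⟨a, f⟩ : Tgt C b) = ⟨a', f'⟩ := by
  constructor <;> intro h <;> cases h <;> rfl

end Mor

def morMap (P : D ⥤ C) (h : Mor D) : Mor C := ⟨P.obj h.1, srcMap P h.1 h.2⟩

def Chain.arrow {n : ℕ} (c : Chain C n) (i : Fin n) : Mor C :=
  ⟨c.obj i.castSucc, c.obj i.succ, c.map i⟩

namespace Chain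

theorem ext_of_arrow {n : ℕ} {c₁ c₂ : Chain C n}
    (hlast : c₁.obj (Fin.last n) = c₂.obj (Fin.last n))
    (harrow : ∀ i, c₁.arrow i = c₂.arrow i) : c₁ = c₂ := by
  obtain ⟨o₁, m₁⟩ := c₁
  obtain ⟨o₂, m₂⟩ := c₂
  obtain rfl : o₁ = o₂ := funext (Fin.lastCases hlast fun i => congrArg Sigma.fst (harrow i))
  obtain rfl : m₁ = m₂ := funext fun i => by simpa [arrow] using harrow i
  rfl

instance [Finite C] [∀ a b : C, Finite (a ⟶ b)] (n : ℕ) : Finite (Chain C n) :=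
  Finite.of_equiv (Σ o : Fin (n + 1) → C, ∀ i : Fin n, o i.castSucc ⟶ o i.succ)
    { toFun := fun p => ⟨p.1, p.2⟩
      invFun := fun c => ⟨c.obj, c.map⟩
      left_inv := fun _ => rfl
      right_inv := fun _ => rfl }

theorem eq_const_of_forall_eq_id {x : C}
    (hx : ∀ (z : C) (f : z ⟶ x), (⟨x, f⟩ : Src C z) = ⟨z, 𝟙 z⟩)
    {m : ℕ} (c : Chain C m) (hc : c.obj (Fin.last m) = x) : c = Chain.const C x m := by
  have hobj : ∀ i, c.obj i = x := by
    intro i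
    induction i using Fin.reverseInduction with
    | last => exact hc
    | cast i ih => exact (congrArg Sigma.fst (hx _ (c.map i ≫ eqToHom ih))).symm
  refine ext_of_arrow (hobj _) fun i => ?_
  calc c.arrow i = ⟨c.obj i.castSucc, x, c.map i ≫ eqToHom (hobj i.succ)⟩ :=
        (Mor.mk_comp_eqToHom _ _).symm
    _ = ⟨c.obj i.castSucc, c.obj i.castSucc, 𝟙 _⟩ := congrArg _ (hx _ _)
    _ = (Chain.const C x m).arrow i := by rw [hobj]; rfl

end Chain

section DiscreteFibration

variable {P : D ⥤ C} (hP : ∀ x, Function.Bijective (tgtMap P x))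
include hP

theorem eq_of_morMap_eq {h₁ h₂ : Mor D} (ht : h₁.2.1 = h₂.2.1)
    (he : morMap P h₁ = morMap P h₂) : h₁ = h₂ := by
  obtain ⟨a₁, b, f₁⟩ := h₁
  obtain ⟨a₂, b₂, f₂⟩ := h₂
  obtain rfl : b = b₂ := ht
  exact (Mor.mk_eq_mk_iff_tgt _ _).2 ((hP b).1 ((Mor.mk_eq_mk_iff_tgt _ _).1 he))

noncomputable def liftTgt (b : D) : Tgt C (P.obj b) ≃ Tgt D b :=
  (Equiv.ofBijective _ (hP b)).symm

theorem tgtMap_liftTgt (b : D) (t : Tgt C (P.obj b)) : tgtMap P b (liftTgt hP b t) = t :=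
  (Equiv.ofBijective _ (hP b)).apply_symm_apply t

noncomputable def morMapFiberEquiv (γ : Mor C) :
    {h : Mor D // morMap P h = γ} ≃ {b : D // P.obj b = γ.2.1} := by
  refine Equiv.ofBijective (fun h => ⟨h.1.2.1, congrArg (·.2.1) h.2⟩)
    ⟨fun h₁ h₂ hb => Subtype.ext
      (eq_of_morMap_eq hP (congrArg Subtype.val hb) (h₁.2.trans h₂.2.symm)), ?_⟩
  obtain ⟨z, x, g⟩ := γ
  rintro ⟨b, hb : P.obj b = x⟩
  subst hb
  exact ⟨⟨⟨_, b, (liftTgt hP b ⟨z, g⟩).2⟩,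
    (Mor.mk_eq_mk_iff_tgt _ _).2 (tgtMap_liftTgt hP b _)⟩, rfl⟩

theorem Chain.eq_of_push_eq {m : ℕ} {c₁ c₂ : Chain D m} (hpush : c₁.push P = c₂.push P)
    (hlast : c₁.obj (Fin.last m) = c₂.obj (Fin.last m)) : c₁ = c₂ := by
  have harrow : ∀ i, c₁.obj i.succ = c₂.obj i.succ → c₁.arrow i = c₂.arrow i := fun i hi =>
    eq_of_morMap_eq hP hi (congrArg (Chain.arrow · i) hpush)
  have hobj : ∀ i, c₁.obj i = c₂.obj i := by
    intro i
    induction i using Fin.reverseInduction with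
    | last => exact hlast
    | cast i ih => exact congrArg Sigma.fst (harrow i ih)
  exact Chain.ext_of_arrow hlast fun i => harrow i (hobj _)

variable {m : ℕ} (c : Chain C m) {a : D} (ha : P.obj a = c.obj (Fin.last m))

noncomputable def Chain.liftObj : ∀ i, {x : D // P.obj x = c.obj i} :=
  Fin.reverseInduction ⟨a, ha⟩ fun i x =>
    ⟨(liftTgt hP x.1 ⟨c.obj i.castSucc, c.map i ≫ eqToHom x.2.symm⟩).1,
      congrArg Sigma.fst (tgtMap_liftTgt hP _ _)⟩

theorem Chain.liftObj_castSucc (i : Fin m) :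
    (c.liftObj hP ha i.castSucc).1 = (liftTgt hP (c.liftObj hP ha i.succ).1
      ⟨c.obj i.castSucc, c.map i ≫ eqToHom (c.liftObj hP ha i.succ).2.symm⟩).1 := by
  rw [Chain.liftObj, Fin.reverseInduction_castSucc]
  rfl

noncomputable def Chain.lift : Chain D m where
  obj i := (c.liftObj hP ha i).1
  map i := eqToHom (c.liftObj_castSucc hP ha i) ≫ (liftTgt hP _ _).2

theorem Chain.lift_obj_last : (c.lift hP ha).obj (Fin.last m) = a := by
  simp [Chain.lift, Chain.liftObj]

theorem Chain.push_lift : (c.lift hP ha).push P = c := by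
  refine Chain.ext_of_arrow (c.liftObj hP ha _).2 fun i => ?_
  change morMap P ((c.lift hP ha).arrow i) = c.arrow i
  rw [Chain.arrow, Chain.lift, Mor.mk_eqToHom_comp]
  exact ((Mor.mk_eq_mk_iff_tgt _ _).2 (tgtMap_liftTgt hP _ _)).trans (Mor.mk_comp_eqToHom _ _)

noncomputable def Chain.pushFiberEquiv :
    {c' : Chain D m // c'.push P = c} ≃ {a : D // P.obj a = c.obj (Fin.last m)} :=
  Equiv.ofBijective (fun c' => ⟨c'.1.obj (Fin.last m), congrArg (Chain.obj · (Fin.last m)) c'.2⟩)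
    ⟨fun c₁ c₂ h => Subtype.ext
        (Chain.eq_of_push_eq hP (c₁.2.trans c₂.2.symm) (congrArg Subtype.val h)),
      fun a => ⟨⟨c.lift hP a.2, c.push_lift hP a.2⟩, Subtype.ext (c.lift_obj_last hP a.2)⟩⟩

noncomputable def chainEquiv (m : ℕ) :
    Chain D m ≃ Σ c : Chain C m, {a : D // P.obj a = c.obj (Fin.last m)} :=
  (Equiv.sigmaFiberEquiv (Chain.push P)).symm.trans
    (Equiv.sigmaCongrRight (Chain.pushFiberEquiv hP))

end DiscreteFibration

theorem IsDFold.sum_eq {P : D ⥤ C} {e : D → ℕ} {d : ℕ} [Fintype D] [DecidableEq C]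
    (hd : IsDFold P e d) (x : C) : ∑ a with P.obj a = x, e a = d := by
  rw [← hd x, Nat.card_sigma,
    Finset.sum_subtype (F := inferInstance) _ fun _ => Finset.mem_filter_univ _]
  simp

variable {P : D ⥤ C} {e : D → ℕ} (hcov : IsRamifiedCovering P e)
include hcov

theorem card_morMap_fiber_eq_sum [Fintype D] [DecidableEq C] [∀ a b : D, Finite (a ⟶ b)]
    {z x : C} (g : z ⟶ x) (hg : (⟨x, g⟩ : Src C z) ≠ ⟨z, 𝟙 z⟩) :
    Nat.card {h : Mor D // morMap P h = ⟨z, x, g⟩} = ∑ a with P.obj a = z, e a := by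
  let bySource : {h : Mor D // morMap P h = ⟨z, x, g⟩} ≃
      Σ a : D, {s : Src D a // morMap P ⟨a, s⟩ = ⟨z, x, g⟩} :=
    { toFun := fun h => ⟨h.1.1, h.1.2, h.2⟩
      invFun := fun h => ⟨⟨h.1, h.2.1⟩, h.2.2⟩
      left_inv := fun _ => rfl
      right_inv := fun _ => rfl }
  rw [Nat.card_congr bySource, Nat.card_sigma, Finset.sum_filter]
  refine Finset.sum_congr rfl fun a _ => ?_
  split_ifs with ha
  · subst ha
    rw [← hcov.src_count a ⟨x, g⟩ hg]
    refine Nat.card_congr (Equiv.subtypeEquivRight fun s => ?_)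
    rw [morMap, sigma_mk_injective.eq_iff, iff_and_self]
    rintro hs rfl
    exact hg (by rw [← hs]; simp [srcMap])
  · have : IsEmpty {s : Src D a // morMap P ⟨a, s⟩ = ⟨z, x, g⟩} :=
      ⟨fun s => ha (congrArg Sigma.fst s.2)⟩
    exact Nat.card_of_isEmpty

variable [Fintype D] [∀ a b : D, Finite (a ⟶ b)] [DecidableEq C] {d : ℕ} (hd : IsDFold P e d)
include hd

theorem forall_eq_id_of_one_lt {a : D} (ha : 1 < e a) (z : C) (f : z ⟶ P.obj a) :
    (⟨P.obj a, f⟩ : Src C z) = ⟨z, 𝟙 z⟩ := by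
  by_contra hf
  have hfiber : ∑ b with P.obj b = P.obj a, 1 = ∑ b with P.obj b = P.obj a, e b :=
    calc ∑ b with P.obj b = P.obj a, 1 = Nat.card {b // P.obj b = P.obj a} := by
          rw [Nat.card_eq_fintype_card, Fintype.card_subtype, Finset.card_eq_sum_ones]
      _ = ∑ b with P.obj b = z, e b :=
          (Nat.card_congr (morMapFiberEquiv hcov.tgt_bij ⟨z, _, f⟩)).symm.trans
            (card_morMap_fiber_eq_sum hcov f hf)
      _ = ∑ b with P.obj b = P.obj a, e b := by rw [hd.sum_eq, hd.sum_eq]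
  have := (Finset.sum_eq_sum_iff_of_le fun b _ => hcov.one_le b).1 hfiber a (by simp)
  omega

theorem sum_chain_last_eq {m : ℕ} [Fintype (Chain C m)] (a : D) :
    ∑ c : Chain C m with c.obj (Fin.last m) = P.obj a, (e a - 1) = e a - 1 := by
  rcases (hcov.one_le a).eq_or_lt with h | h
  · simp [← h]
  · rw [Finset.sum_const, smul_eq_mul,
      Finset.card_eq_one.2 ⟨Chain.const C (P.obj a) m, ?_⟩, one_mul]
    ext c
    simp only [Finset.mem_filter_univ, Finset.mem_singleton]
    exact ⟨Chain.eq_const_of_forall_eq_id (forall_eq_id_of_one_lt hcov hd h) c, fun hc => hc ▸ rfl⟩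

variable [Finite C] [∀ a b : C, Finite (a ⟶ b)]

theorem mul_card_chain (m : ℕ) :
    d * Nat.card (Chain C m) = Nat.card (Chain D m) + ∑ a, (e a - 1) := by
  have := Fintype.ofFinite (Chain C m)
  have hlift : Nat.card (Chain D m) =
      ∑ c : Chain C m, ∑ a with P.obj a = c.obj (Fin.last m), 1 := by
    rw [Nat.card_congr (chainEquiv hcov.tgt_bij m), Nat.card_sigma]
    simp [Nat.card_eq_fintype_card, Fintype.card_subtype]
  calc d * Nat.card (Chain C m)
      = ∑ c : Chain C m, ∑ a with P.obj a = c.obj (Fin.last m), e a := by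
        simp [hd.sum_eq, Nat.card_eq_fintype_card, mul_comm]
    _ = ∑ c : Chain C m, ∑ a with P.obj a = c.obj (Fin.last m), (1 + (e a - 1)) := by
        refine Finset.sum_congr rfl fun c _ => Finset.sum_congr rfl fun a _ => ?_
        have := hcov.one_le a
        omega
    _ = Nat.card (Chain D m) +
          ∑ a, ∑ c : Chain C m with c.obj (Fin.last m) = P.obj a, (e a - 1) := by
        rw [Finset.sum_congr rfl fun c _ => Finset.sum_add_distrib, Finset.sum_add_distrib,
          ← hlift, Finset.sum_comm' (t' := .univ)
            (s' := fun a => {c | c.obj (Fin.last m) = P.obj a}) fun c a => by simp [eq_comm]]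
    _ = Nat.card (Chain D m) + ∑ a, (e a - 1) := by
        simp only [sum_chain_last_eq hcov hd]

theorem catLogZeta_eq_of_isRamifiedCovering :
    catLogZeta D = d • catLogZeta C + (∑ a, (e a - 1)) • rescale (-1) (log ℚ) := by
  ext m
  rcases m with _ | m
  · simp [catLogZeta, constantCoeff_rescale_neg_one_log]
  · have hcount : (d : ℚ) * Nat.card (Chain C (m + 1)) =
        Nat.card (Chain D (m + 1)) + ∑ a, (e a - 1 : ℕ) := by
      exact_mod_cast mul_card_chain hcov hd (m + 1)
    simp only [map_add, map_nsmul, coeff_rescale_neg_one_log m.succ_ne_zero]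
    simp only [catLogZeta, coeff_mk, if_neg m.succ_ne_zero, nsmul_eq_mul]
    field_simp
    linear_combination -hcount

end Covering

/-- For a `d`-fold ramified covering of finite categories, the zeta
function of `C` divides that of `C̃`; precisely
`ζ_{C̃}(z) = ζ_C(z)^d · (1 − z)^V` with `V = Σ_{xt ∈ Ob(C̃)} (e(xt) − 1)`. -/
theorem ramifiedCovering_zeta {D C : Type u}
    [SmallCategory D] [SmallCategory C]
    [Fintype D] [Fintype C] [∀ a b : D, Finite (a ⟶ b)] [∀ a b : C, Finite (a ⟶ b)]
    (P : D ⥤ C) (e : D → ℕ) (d : ℕ)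
    (h : IsRamifiedCovering P e) (hd : IsDFold P e d) :
    catZeta D = catZeta C ^ d * (1 - PowerSeries.X) ^ (∑ a : D, (e a - 1)) := by
  classical
  have hlogC := constantCoeff_catLogZeta C
  have hlog := constantCoeff_rescale_neg_one_log
  rw [catZeta_eq_formalExp, catZeta_eq_formalExp, catLogZeta_eq_of_isRamifiedCovering h hd,
    formalExp_add (by simp [hlogC]) (by simp [hlog]), formalExp_nsmul hlogC,
    formalExp_nsmul hlog, formalExp_rescale_neg_one_log]
end
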